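/- Let p be a prime, G a finite group, L ≤ G a subgroup, and let B, E ≤ N_G(L) be abelian p-subgroups such that LB ≤ LE, where LB and LE denote the subgroups generated by L and B, respectively L and E. If O_p(C_G(LE)) = 1, then O_p(C_G(LB)) = 1. If moreover L is a component of G, then also O_p(LB) = 1. -/

import Mathlib

attribute [local instance] Classical.propDecidable

noncomputable section

namespace QF

/-! ## Group-theoretic notions -/

/-- `H` is a normal subgroup of `K` (as subgroups of an ambient group `G`). -/
def NormalIn {G : Type*} [Group G] (H K : Subgroup G) : Prop :=
  H ≤ K ∧ ∀ k ∈ K, ∀ h ∈ H, k * h * k⁻¹ ∈ H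

/-- `L` is a subnormal subgroup of `G`: there is a finite chain of subgroups from `L` to `G`,
each normal in the next. -/
def IsSubnormal {G : Type*} [Group G] (L : Subgroup G) : Prop :=
  ∃ (n : ℕ) (c : ℕ → Subgroup G), c 0 = L ∧ c n = ⊤ ∧ ∀ i < n, NormalIn (c i) (c (i + 1))

/-- `L` is quasisimple: `L = [L,L]` and `L/Z(L)` is a nonabelian simple group. -/
def IsQuasisimple {G : Type*} [Group G] (L : Subgroup G) : Prop :=
  ⁅L, L⁆ = L ∧ IsSimpleGroup (↥L ⧸ Subgroup.center ↥L) ∧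
    ∃ a b : ↥L ⧸ Subgroup.center ↥L, a * b ≠ b * a

/-- A component of a group: a subnormal quasisimple subgroup. -/
def IsComponent {G : Type*} [Group G] (L : Subgroup G) : Prop :=
  IsSubnormal L ∧ IsQuasisimple L

/-- The Fitting subgroup: the subgroup generated by all nilpotent normal subgroups. -/
def fittingSubgroup (G : Type*) [Group G] : Subgroup G :=
  sSup {N : Subgroup G | N.Normal ∧ Group.IsNilpotent ↥N}

/-- `E(G)`: the subgroup generated by all components of `G`. -/
def layer (G : Type*) [Group G] : Subgroup G :=
  sSup {L : Subgroup G | IsComponent L}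

/-- The generalized Fitting subgroup `F*(G) = F(G) ⬝ E(G)`. -/
def genFitting (G : Type*) [Group G] : Subgroup G :=
  fittingSubgroup G ⊔ layer G

/-- `O_p(G) = 1`: every normal `p`-subgroup of `G` is trivial. -/
def OpTrivial (p : ℕ) (G : Type*) [Group G] : Prop :=
  ∀ N : Subgroup G, N.Normal → IsPGroup p ↥N → N = ⊥

/-- `E` is an elementary abelian `p`-subgroup (possibly trivial). -/
def IsElemAb (p : ℕ) {G : Type*} [Group G] (E : Subgroup G) : Prop :=
  (∀ x ∈ E, ∀ y ∈ E, x * y = y * x) ∧ ∀ x ∈ E, x ^ p = 1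

/-- The Quillen poset `A_p(H)` of nontrivial elementary abelian `p`-subgroups of `G`
contained in the subgroup `H`, regarded as a set of subgroups of `G`. -/
def apIn (p : ℕ) {G : Type*} [Group G] (H : Subgroup G) : Set (Subgroup G) :=
  {E | E ≠ ⊥ ∧ IsElemAb p E ∧ E ≤ H}

/-- The `p`-outer poset of `L` in `G`: nontrivial elementary abelian `p`-subgroups `B`
of `N_G(L)` with `B ∩ (L C_G(L)) = 1`. -/
def outPoset (p : ℕ) {G : Type*} [Group G] (L : Subgroup G) : Set (Subgroup G) :=
  {B | B ≠ ⊥ ∧ IsElemAb p B ∧ B ≤ Subgroup.normalizer (L : Set G) ∧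
    B ⊓ (L ⊔ Subgroup.centralizer (L : Set G)) = ⊥}

/-- The `p`-rank of a group: the largest `n` such that `K` contains an elementary abelian
`p`-subgroup of order `p ^ n`. -/
def pRank (p : ℕ) (K : Type*) [Group K] : ℕ :=
  sSup {n : ℕ | ∃ E : Subgroup K, IsElemAb p E ∧ Nat.card ↥E = p ^ n}

/-- The `p`-local `q`-rank of a group `K`: the maximum of the `q`-ranks of normalizers of
nontrivial `p`-subgroups. -/
def pLocalRank (p q : ℕ) (K : Type*) [Group K] : ℕ :=
  sSup {n : ℕ | ∃ P : Subgroup K, P ≠ ⊥ ∧ IsPGroup p ↥P ∧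
    ∃ E : Subgroup K, E ≤ Subgroup.normalizer (P : Set K) ∧ IsElemAb q E ∧ Nat.card ↥E = q ^ n}

/-- A group is `q`-elementary if it is the (internal) direct product of a cyclic group and
a `q`-group. -/
def qElementary (q : ℕ) (G : Type*) [Group G] : Prop :=
  ∃ C R : Subgroup G, IsCyclic ↥C ∧ IsPGroup q ↥R ∧
    (∀ c ∈ C, ∀ r ∈ R, c * r = r * c) ∧ C ⊓ R = ⊥ ∧ C ⊔ R = ⊤

/-! ## The augmented rational chain complex of a finite poset

We represent a rational simplicial chain of (degree `k - 1`) of a poset `α` as a function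
`Finset α → ℚ` supported on the `k`-element chains of `α`. -/

/-- The coefficient of the face `t` in the boundary of the simplex `s`: if `t ⊆ s` with
exactly one element `x` of `s` deleted, this is `(-1) ^ (number of elements of s below x)`. -/
def bdryCoeff {α : Type*} [PartialOrder α] (s t : Finset α) : ℚ :=
  if t ⊆ s ∧ t.card + 1 = s.card then
    ∑ x ∈ s \ t, (-1 : ℚ) ^ (s.filter fun y => y < x).card
  else 0

/-- The simplicial boundary operator (on functions `Finset α → ℚ`). -/
def bdryFun {α : Type*} [PartialOrder α] (f : Finset α → ℚ) : Finset α → ℚ :=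
  fun t => ∑ᶠ s : Finset α, bdryCoeff s t * f s

/-- `f` is a chain of size `k` (i.e. simplicial degree `k - 1`) of the subposet `S` of `α`:
it is supported on totally ordered `k`-element subsets of `S`. -/
def SuppOn {α : Type*} [PartialOrder α] (S : Set α) (k : ℕ) (f : Finset α → ℚ) : Prop :=
  ∀ s, f s ≠ 0 → s.card = k ∧ IsChain (· ≤ ·) (↑s : Set α) ∧ ↑s ⊆ S

/-- `f` is a cycle of size `k` (degree `k - 1`) of the augmented rational chain complex of
the subposet `S`. -/
def IsCycleOn {α : Type*} [PartialOrder α] (S : Set α) (k : ℕ) (f : Finset α → ℚ) : Prop :=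
  SuppOn S k f ∧ bdryFun f = 0

/-- `f` is a boundary of size `k` (degree `k - 1`) in the augmented rational chain complex of
the subposet `S`. -/
def IsBoundaryOn {α : Type*} [PartialOrder α] (S : Set α) (k : ℕ) (f : Finset α → ℚ) : Prop :=
  ∃ g : Finset α → ℚ, SuppOn S (k + 1) g ∧ bdryFun g = f

/-- The reduced rational homology of the subposet `S` is nonzero in degree `k - 1`. -/
def RHomNZ {α : Type*} [PartialOrder α] (S : Set α) (k : ℕ) : Prop :=
  ∃ f : Finset α → ℚ, IsCycleOn S k f ∧ ¬ IsBoundaryOn S k f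

/-- The reduced Euler characteristic of the subposet `S`:
`χ̃(S) = ∑_{n ≥ -1} (-1)^n f_n(S)` where `f_n` is the number of `(n+1)`-element chains. -/
def redEuler {α : Type*} [PartialOrder α] (S : Set α) : ℤ :=
  ∑ᶠ s : Finset α,
    if IsChain (· ≤ ·) (↑s : Set α) ∧ ↑s ⊆ S then (-1 : ℤ) ^ (s.card + 1) else 0

/-! ## Chains in a subcomplex of the order complex -/

/-- `f` is a chain of size `k` supported on the subcomplex `M` (together with the empty chain,
for the augmentation). -/
def SuppM {α : Type*} [PartialOrder α] (M : Set (Finset α)) (k : ℕ) (f : Finset α → ℚ) : Prop :=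
  ∀ s, f s ≠ 0 → s.card = k ∧ (s = ∅ ∨ s ∈ M)

/-- `f` is a cycle of size `k` of the (augmented) chain complex of the subcomplex `M`. -/
def IsCycleM {α : Type*} [PartialOrder α] (M : Set (Finset α)) (k : ℕ) (f : Finset α → ℚ) :
    Prop :=
  SuppM M k f ∧ bdryFun f = 0

/-- `f` is a boundary of size `k` in the (augmented) chain complex of the subcomplex `M`. -/
def IsBoundaryM {α : Type*} [PartialOrder α] (M : Set (Finset α)) (k : ℕ) (f : Finset α → ℚ) :
    Prop :=
  ∃ g : Finset α → ℚ, SuppM M (k + 1) g ∧ bdryFun g = f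

/-! ## Quillen-conjecture properties -/

/-- `G` satisfies (H-QC) at `p`: if `O_p(G) = 1` then `A_p(G)` has nonzero reduced rational
homology in some degree. -/
def HQC (p : ℕ) (G : Type*) [Group G] : Prop :=
  OpTrivial p G → ∃ k : ℕ, RHomNZ (apIn p (⊤ : Subgroup G)) k

/-- `K` has Quillen dimension at `p`: if `O_p(K) = 1` then `A_p(K)` has nonzero reduced
rational homology in degree `m_p(K) - 1`. -/
def QDp (p : ℕ) (K : Type*) [Group K] : Prop :=
  OpTrivial p K → RHomNZ (apIn p (⊤ : Subgroup K)) (pRank p K)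

/-- The fixed-point subposet `A_p(H)^Q` under conjugation by the subgroup `Q`. -/
def apFixed (p : ℕ) {G : Type*} [Group G] (H Q : Subgroup G) : Set (Subgroup G) :=
  {E | E ∈ apIn p H ∧ ∀ x ∈ Q, ∀ g : G, g ∈ E ↔ x * g * x⁻¹ ∈ E}

/-- The fixed-point subposet `A_p(H)^g` under conjugation by the element `g`. -/
def apFixedElt (p : ℕ) {G : Type*} [Group G] (H : Subgroup G) (g : G) : Set (Subgroup G) :=
  {E | E ∈ apIn p H ∧ ∀ h : G, h ∈ E ↔ g * h * g⁻¹ ∈ E}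

/-- Property `R(2)` for a (nonabelian simple) group `L`. -/
def PropertyR2 (L : Type*) [Group L] : Prop :=
  ∃ Q : Subgroup L, qElementary 3 ↥Q ∧ Odd (Nat.card ↥Q) ∧ ¬ OpTrivial 3 ↥Q ∧
    ¬ ((3 : ℤ) ∣ redEuler (apFixed 2 (⊤ : Subgroup L) Q)) ∧
    ∀ E : Subgroup (MulAut L), E ≠ ⊥ → IsElemAb 2 E →
      E ≤ Subgroup.centralizer
        ((Subgroup.map (MulAut.conj : L →* MulAut L) Q : Subgroup (MulAut L)) : Set (MulAut L)) →
      E ≤ (MulAut.conj : L →* MulAut L).range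

/-! ## The pre-join of posets and the initial shuffle product -/

/-- The pre-join of `X` and `Y`: the poset `(C⁻X × C⁻Y) \ {(⊥, ⊥)}`. -/
abbrev PreJoin (X Y : Type*) := {p : WithBot X × WithBot Y // p ≠ (⊥, ⊥)}

/-- The embedding of `X` into the pre-join, `x ↦ (x, ⊥)`. -/
def inX {X Y : Type*} (x : X) : PreJoin X Y :=
  ⟨((x : WithBot X), ⊥), fun h => WithBot.coe_ne_bot (congrArg Prod.fst h)⟩

/-- The embedding of `Y` into the pre-join, `y ↦ (⊥, y)`. -/
def inY {X Y : Type*} (y : Y) : PreJoin X Y :=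
  ⟨(⊥, (y : WithBot Y)), fun h => WithBot.coe_ne_bot (congrArg Prod.snd h)⟩

/-- The element `(x, y)` of the pre-join. -/
def inXY {X Y : Type*} (x : X) (y : Y) : PreJoin X Y :=
  ⟨((x : WithBot X), (y : WithBot Y)), fun h => WithBot.coe_ne_bot (congrArg Prod.fst h)⟩

/-- `c` is a shuffle chain for the pair `(a, b)`: a maximal chain of the grid poset determined
by the `X`-part of `a` and by `b` (with the bottom `(⊥, ⊥)` removed), i.e. a chain of the
pre-join of cardinality `|a_X| + |b|` whose coordinates come from `a` and `b`. -/
def gridOK {X Y W : Type*} [PartialOrder X] [PartialOrder Y] [PartialOrder W]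
    (ιP : PreJoin X Y ↪o W) (a b : Finset W) (c : Finset (PreJoin X Y)) : Prop :=
  IsChain (· ≤ ·) (↑c : Set (PreJoin X Y)) ∧
  c.card = (a.filter fun w => ∃ x : X, w = ιP (inX x)).card + b.card ∧
  ∀ q ∈ c, (q.1.1 = ⊥ ∨ ∃ x : X, q.1.1 = (x : WithBot X) ∧ ιP (inX x) ∈ a) ∧
    (q.1.2 = ⊥ ∨ ∃ y : Y, q.1.2 = (y : WithBot Y) ∧ ιP (inY y) ∈ b)

/-- The number of inversions of the shuffle chain `c` (the number of cells of the
`a_X × b` rectangle lying below the corresponding lattice path). -/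
def invCount {X Y W : Type*} [PartialOrder X] [PartialOrder Y] [PartialOrder W]
    (ιP : PreJoin X Y ↪o W) (a b : Finset W) (c : Finset (PreJoin X Y)) : ℕ :=
  Set.ncard {xy : X × Y | ιP (inX xy.1) ∈ a ∧ ιP (inY xy.2) ∈ b ∧
    ∀ q ∈ c, q.1.1 = (xy.1 : WithBot X) → (xy.2 : WithBot Y) ≤ q.1.2}

/-- The coefficient of the chain `e` of `W` in the initial shuffle product `T(a, b)`. -/
def Tcoeff {X Y Z W : Type*} [PartialOrder X] [PartialOrder Y] [PartialOrder Z] [PartialOrder W]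
    (ιP : PreJoin X Y ↪o W) (ιZ : Z ↪o W) (a b e : Finset W) : ℚ :=
  ∑ᶠ c : Finset (PreJoin X Y),
    if gridOK ιP a b c ∧
        e = c.image (fun q => ιP q) ∪ a.filter (fun w => ∃ z : Z, w = ιZ z) then
      (-1 : ℚ) ^ invCount ιP a b c
    else 0

/-- The initial shuffle product `T_*(f ⊗ g)`, as a function on `Finset W`. -/
def Tmap {X Y Z W : Type*} [PartialOrder X] [PartialOrder Y] [PartialOrder Z] [PartialOrder W]
    (ιP : PreJoin X Y ↪o W) (ιZ : Z ↪o W) (f g : Finset W → ℚ) : Finset W → ℚ :=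
  fun e => ∑ᶠ a : Finset W, ∑ᶠ b : Finset W, f a * g b * Tcoeff ιP ιZ a b e

section GroupTheory

open Subgroup

variable {G : Type*} [Group G]

theorem centralizer_sup (H K : Subgroup G) :
    centralizer ((H ⊔ K : Subgroup G) : Set G) = centralizer (H : Set G) ⊓ centralizer K := by
  ext x
  simp only [sup_eq_closure, centralizer_closure, mem_inf, mem_centralizer_iff, Set.mem_union,
    or_imp, forall_and]

theorem normalizer_le_normalizer_centralizer (H : Subgroup G) :
    normalizer (H : Set G) ≤ normalizer (centralizer (H : Set G) : Set G) := by
  refine le_normalizer_iff.mpr fun g hg c hc => mem_centralizer_iff.mpr fun h hh => ?_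
  have hconj : g⁻¹ * h * g ∈ H := (mem_normalizer_iff''.mp hg h).mp hh
  have hcomm := mem_centralizer_iff.mp hc _ hconj
  calc h * (g * c * g⁻¹) = g * ((g⁻¹ * h * g) * c) * g⁻¹ := by group
    _ = g * (c * (g⁻¹ * h * g)) * g⁻¹ := by rw [hcomm]
    _ = g * c * g⁻¹ * h := by group

/-- Since `LE/L` is abelian, every subgroup of `LE` containing `L` is normal in `LE`. -/
theorem le_normalizer_sup_of_le_sup {L B E : Subgroup G} (hE : E ≤ normalizer (L : Set G))
    (hEab : ∀ x ∈ E, ∀ y ∈ E, x * y = y * x) (hBE : B ≤ L ⊔ E) :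
    E ≤ normalizer ((L ⊔ B : Subgroup G) : Set G) := by
  refine le_normalizer_iff.mpr fun e he x hx => ?_
  suffices hmap : (L ⊔ B).map (MulAut.conj e) ≤ L ⊔ B from hmap ⟨x, hx, rfl⟩
  rw [Subgroup.map_sup]
  refine sup_le ?_ ?_
  · rintro _ ⟨l, hl, rfl⟩
    exact mem_sup_left ((mem_normalizer_iff.mp (hE he) l).mp hl)
  rintro _ ⟨b, hb, rfl⟩
  obtain ⟨l, hl, e', he', rfl⟩ : ∃ l ∈ L, ∃ e' ∈ E, l * e' = b := by
    simpa [← SetLike.mem_coe, coe_mul_of_right_le_normalizer_left L E hE, Set.mem_mul]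
      using hBE hb
  have hconj : e * (l * e') * e⁻¹ = (e * l * e⁻¹) * l⁻¹ * (l * e') := by
    calc e * (l * e') * e⁻¹ = e * l * e⁻¹ * (e * e') * e⁻¹ := by group
      _ = (e * l * e⁻¹) * l⁻¹ * (l * e') := by rw [hEab e he e' he']; group
  change e * (l * e') * e⁻¹ ∈ L ⊔ B
  rw [hconj]
  exact mul_mem (mul_mem (mem_sup_left ((mem_normalizer_iff.mp (hE he) l).mp hl))
    (mem_sup_left (inv_mem hl))) (mem_sup_right hb)

/-- The subgroup `O_p(H)`. -/
def pCore (p : ℕ) (H : Type*) [Group H] : Subgroup H :=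
  ⨅ P : Sylow p H, (P : Subgroup H)

section pCore

variable (p : ℕ) (H : Type*) [Group H]

instance pCore_characteristic : (pCore p H).Characteristic := by
  refine characteristic_iff_comap_le.mpr fun φ x hx => mem_iInf.mpr fun P => ?_
  have hφx : φ x ∈ ((φ • P : Sylow p H) : Subgroup H) := mem_iInf.mp hx (φ • P)
  rw [Sylow.pointwise_smul_def] at hφx
  exact (smul_mem_pointwise_smul_iff (a := φ)).mp hφx

theorem isPGroup_pCore : IsPGroup p (pCore p H) :=
  (Classical.arbitrary (Sylow p H)).isPGroup'.to_le (iInf_le _ _)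

variable {p H}

theorem le_pCore {N : Subgroup H} [N.Normal] (hN : IsPGroup p N) : N ≤ pCore p H :=
  le_iInf hN.le_sylow_of_normal

theorem opTrivial_iff_pCore_eq_bot : OpTrivial p H ↔ pCore p H = ⊥ :=
  ⟨fun h => h _ inferInstance (isPGroup_pCore p H),
    fun h _ _ hN => le_bot_iff.mp (h ▸ le_pCore hN)⟩

end pCore

theorem normalizer_le_normalizer_map_subtype {H : Subgroup G} (K : Subgroup H)
    [K.Characteristic] :
    normalizer (H : Set G) ≤ normalizer ((K.map H.subtype : Subgroup G) : Set G) := by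
  intro g hg
  let φ : MulAut H := H.normalizerMonoidHom ⟨g, hg⟩
  have hφ : (MulAut.conj g).toMonoidHom.comp H.subtype = H.subtype.comp φ.toMonoidHom := rfl
  rw [mem_normalizer_iff_map_conj_eq]
  change (K.map H.subtype).map (MulAut.conj g).toMonoidHom = _
  rw [map_map, hφ, ← map_map, characteristic_iff_map_eq.mp ‹_› φ]

theorem le_normalizer_map_subtype {H : Subgroup G} (N : Subgroup H) [N.Normal] :
    H ≤ normalizer ((N.map H.subtype : Subgroup G) : Set G) := by
  simpa [normalizer_eq_top, ← MonoidHom.range_eq_map] using le_normalizer_map (H := N) H.subtype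

theorem OpTrivial.eq_bot_of_le_normalizer {p : ℕ} {C R : Subgroup G} (h : OpTrivial p C)
    (hRC : R ≤ C) (hCR : C ≤ normalizer (R : Set G)) (hR : IsPGroup p R) : R = ⊥ := by
  have := normal_subgroupOf_of_le_normalizer hCR
  have hbot := h (R.subgroupOf C) this hR.comap_subtype
  rwa [subgroupOf_eq_bot, disjoint_of_le_iff_left_eq_bot hRC] at hbot

/-- The number of fixed points of `P` acting on `R` by conjugation is divisible by `p`. -/
theorem inf_centralizer_ne_bot_of_isPGroup [Finite G] {p : ℕ} [Fact p.Prime] {P R : Subgroup G}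
    (hP : IsPGroup p P) (hR : IsPGroup p R) (hR1 : R ≠ ⊥) (hPR : P ≤ normalizer (R : Set G)) :
    R ⊓ centralizer (P : Set G) ≠ ⊥ := by
  have hQ : IsPGroup p (P.subgroupOf (normalizer (R : Set G))) := hP.comap_subtype
  have hdvd : p ∣ Nat.card R := by
    have : Nontrivial R := (nontrivial_iff_ne_bot R).mpr hR1
    obtain ⟨n, hn, hcard⟩ := hR.nontrivial_iff_card.mp this
    exact hcard ▸ dvd_pow_self p hn.ne'
  obtain ⟨x, hx, hx1⟩ := hQ.exists_fixed_point_of_prime_dvd_card_of_fixed_point R hdvd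
    (a := 1) fun _ => smul_one _
  refine (ne_bot_iff_exists_ne_one).mpr ⟨⟨x, x.2, mem_centralizer_iff.mpr fun g hg => ?_⟩, ?_⟩
  · have hfix : g * x * g⁻¹ = x := congrArg Subtype.val (hx ⟨⟨g, hPR hg⟩, hg⟩)
    exact mul_inv_eq_iff_eq_mul.mp hfix
  · exact fun h => hx1 (Subtype.ext (congrArg Subtype.val h).symm)

/-- A normal `p`-subgroup of `H` maps onto `1` or onto all of the simple group `H/Z(H)`; the
latter would make `H/Z(H)` a `p`-group, hence solvable, hence abelian. -/
theorem le_center_of_isPGroup {H : Type*} [Group H] [Finite H] {p : ℕ} [Fact p.Prime]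
    [IsSimpleGroup (H ⧸ center H)] (hH : ∃ a b : H ⧸ center H, a * b ≠ b * a)
    {N : Subgroup H} [N.Normal] (hN : IsPGroup p N) : N ≤ center H := by
  have himage : (N.map (QuotientGroup.mk' (center H))).Normal :=
    Normal.map inferInstance _ (QuotientGroup.mk'_surjective _)
  rcases himage.eq_bot_or_eq_top with h | h
  · rwa [Subgroup.map_eq_bot_iff, QuotientGroup.ker_mk'] at h
  · have hQ : IsPGroup p (H ⧸ center H) :=
      (h ▸ hN.map (QuotientGroup.mk' (center H))).of_equiv topEquiv
    have := hQ.isNilpotent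
    obtain ⟨a, b, hab⟩ := hH
    exact absurd (IsSimpleGroup.comm_iff_isSolvable.mpr inferInstance a b) hab

/-- By the three subgroups lemma, `[L, R] ≤ Z(L)` together with `L = [L, L]` forces
`[L, R] = 1`. -/
theorem le_centralizer_of_isQuasisimple [Finite G] {p : ℕ} [Fact p.Prime] {L R : Subgroup G}
    (hL : IsQuasisimple L) (hR : IsPGroup p R) (hLR : L ≤ normalizer (R : Set G))
    (hRL : R ≤ normalizer (L : Set G)) : R ≤ centralizer (L : Set G) := by
  obtain ⟨hLL, hsimple, hnc⟩ := hL
  have hcomm : ⁅L, R⁆ ≤ L ⊓ R := commutator_le.mpr fun l hl r hr => by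
    rw [commutatorElement_def]
    refine mem_inf.mpr ⟨?_, ?_⟩
    · simpa only [mul_assoc] using
        mul_mem hl ((mem_normalizer_iff.mp (hRL hr) _).mp (inv_mem hl))
    · exact mul_mem ((mem_normalizer_iff.mp (hLR hl) r).mp hr) (inv_mem hr)
  have := normal_subgroupOf_of_le_normalizer hLR
  have hcenter := le_center_of_isPGroup hnc (N := R.subgroupOf L) hR.comap_subtype
  have hcent : ⁅L, R⁆ ≤ centralizer (L : Set G) := fun x hx =>
    mem_centralizer_iff.mpr fun l hl =>
      congrArg Subtype.val (mem_center_iff.mp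
        (hcenter (mem_subgroupOf.mpr (hcomm hx).2 : ⟨x, (hcomm hx).1⟩ ∈ R.subgroupOf L)) ⟨l, hl⟩)
  have h3 : ⁅⁅L, L⁆, R⁆ = ⊥ := commutator_commutator_eq_bot_of_rotate
    (commutator_eq_bot_iff_le_centralizer.mpr hcent)
    (commutator_comm R L ▸ commutator_eq_bot_iff_le_centralizer.mpr hcent)
  rw [hLL, commutator_eq_bot_iff_le_centralizer] at h3
  exact le_centralizer_iff.mp h3

/-- `LE` normalizes `LB`, hence `C_G(LB)` and its characteristic subgroup `R = O_p(C_G(LB))`.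
If `R ≠ 1`, the `p`-group `E` centralizes some `x ≠ 1` of `R`; then `R ∩ C_G(E)` is a nontrivial
normal `p`-subgroup of `C_G(LE) = C_G(L) ∩ C_G(E)`. -/
theorem opTrivial_centralizer_sup_of_le [Finite G] {p : ℕ} [Fact p.Prime] {L B E : Subgroup G}
    (hE : E ≤ normalizer (L : Set G)) (hEp : IsPGroup p E)
    (hEab : ∀ x ∈ E, ∀ y ∈ E, x * y = y * x) (hle : L ⊔ B ≤ L ⊔ E)
    (hOp : OpTrivial p (centralizer ((L ⊔ E : Subgroup G) : Set G))) :
    OpTrivial p (centralizer ((L ⊔ B : Subgroup G) : Set G)) := by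
  set C := centralizer ((L ⊔ B : Subgroup G) : Set G)
  set R := (pCore p C).map C.subtype
  rw [opTrivial_iff_pCore_eq_bot, ← map_eq_bot_iff_of_injective _ C.subtype_injective]
  have hRp : IsPGroup p R := (isPGroup_pCore p C).map _
  have hNR : normalizer (C : Set G) ≤ normalizer (R : Set G) :=
    normalizer_le_normalizer_map_subtype _
  have hER : E ≤ normalizer (R : Set G) :=
    (le_normalizer_sup_of_le_sup hE hEab (le_sup_right.trans hle)).trans
      ((normalizer_le_normalizer_centralizer _).trans hNR)
  by_contra hR1
  refine inf_centralizer_ne_bot_of_isPGroup hEp hRp hR1 hER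
    (hOp.eq_bot_of_le_normalizer ?_ ?_ hRp.to_inf_left)
  · rw [centralizer_sup]
    exact inf_le_inf_right _ ((map_subtype_le _).trans ((centralizer_sup L B).le.trans inf_le_left))
  · refine le_trans (le_inf ?_ ?_) inf_normalizer_le_normalizer_inf
    · exact (centralizer_le hle).trans (le_normalizer.trans hNR)
    · exact ((centralizer_sup L E).le.trans inf_le_right).trans le_normalizer

/-- A normal `p`-subgroup `R` of `LB` centralizes the component `L`, so `R ∩ C_G(B)` lies in
`C_G(LB)`, where it is a normal `p`-subgroup; it is nontrivial if `R` is. -/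
theorem opTrivial_sup_of_isQuasisimple [Finite G] {p : ℕ} [Fact p.Prime] {L B : Subgroup G}
    (hL : IsQuasisimple L) (hB : B ≤ normalizer (L : Set G)) (hBp : IsPGroup p B)
    (hC : OpTrivial p (centralizer ((L ⊔ B : Subgroup G) : Set G))) :
    OpTrivial p (L ⊔ B : Subgroup G) := by
  intro N hN hNp
  set R := N.map (L ⊔ B).subtype
  rw [← map_eq_bot_iff_of_injective _ (L ⊔ B).subtype_injective]
  have hRp : IsPGroup p R := hNp.map _
  have hRLB : R ≤ L ⊔ B := map_subtype_le _
  have hLBR : L ⊔ B ≤ normalizer (R : Set G) := le_normalizer_map_subtype N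
  have hRcent : R ≤ centralizer (L : Set G) :=
    le_centralizer_of_isQuasisimple hL hRp (le_sup_left.trans hLBR)
      (hRLB.trans (sup_le le_normalizer hB))
  by_contra hR1
  refine inf_centralizer_ne_bot_of_isPGroup hBp hRp hR1 (le_sup_right.trans hLBR)
    (hC.eq_bot_of_le_normalizer ?_ ?_ hRp.to_inf_left)
  · rw [centralizer_sup]
    exact inf_le_inf_right _ hRcent
  · exact (centralizer_le (inf_le_left.trans hRLB)).trans (centralizer_le_normalizer _)

end GroupTheory

theorem statement4_general {p : ℕ} (hp : p.Prime) {G : Type*} [Group G] [Finite G]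
    (L B E : Subgroup G)
    (hE : E ≤ Subgroup.normalizer (L : Set G))
    (hBp : IsPGroup p ↥B)
    (hEp : IsPGroup p ↥E) (hEab : ∀ x ∈ E, ∀ y ∈ E, x * y = y * x)
    (hle : L ⊔ B ≤ L ⊔ E)
    (hOp : OpTrivial p ↥(Subgroup.centralizer ((L ⊔ E : Subgroup G) : Set G))) :
    OpTrivial p ↥(Subgroup.centralizer ((L ⊔ B : Subgroup G) : Set G)) ∧
    (IsComponent L → OpTrivial p ↥(L ⊔ B : Subgroup G)) := by
  have : Fact p.Prime := ⟨hp⟩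
  have hC : OpTrivial p (Subgroup.centralizer ((L ⊔ B : Subgroup G) : Set G)) :=
    opTrivial_centralizer_sup_of_le hE hEp hEab hle hOp
  have hB : B ≤ Subgroup.normalizer (L : Set G) :=
    le_sup_right.trans (hle.trans (sup_le Subgroup.le_normalizer hE))
  exact ⟨hC, fun hL => opTrivial_sup_of_isQuasisimple hL.2 hB hBp hC⟩

/-- for abelian `p`-subgroups `B, E ≤ N_G(L)` with `LB ≤ LE`, triviality of
`O_p(C_G(LE))` implies that of `O_p(C_G(LB))`; and if moreover `L` is a component of `G`,
also `O_p(LB) = 1`. -/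
theorem statement4 {p : ℕ} (hp : p.Prime) {G : Type*} [Group G] [Finite G]
    (L B E : Subgroup G)
    (hB : B ≤ Subgroup.normalizer (L : Set G)) (hE : E ≤ Subgroup.normalizer (L : Set G))
    (hBp : IsPGroup p ↥B) (hBab : ∀ x ∈ B, ∀ y ∈ B, x * y = y * x)
    (hEp : IsPGroup p ↥E) (hEab : ∀ x ∈ E, ∀ y ∈ E, x * y = y * x)
    (hle : L ⊔ B ≤ L ⊔ E)
    (hOp : OpTrivial p ↥(Subgroup.centralizer ((L ⊔ E : Subgroup G) : Set G))) :
    OpTrivial p ↥(Subgroup.centralizer ((L ⊔ B : Subgroup G) : Set G)) ∧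
    (IsComponent L → OpTrivial p ↥(L ⊔ B : Subgroup G)) :=
  statement4_general hp L B E hE hBp hEp hEab hle hOp

end QF
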